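/- In LR-Subtraction Nim with removable set S = {2,3,6}, the outcome of n tokens is: L if n ∈ {0,2,5,6} or n ≥ 8, R if n = 1, and N if n ∈ {3,4,7}. -/
import Mathlib

open scoped Classical

inductive Outcome : Type
  | L | R | N | P
deriving DecidableEq

/-- Outcome determined from the set of outcomes of the options of a non-terminal position. -/
noncomputable def fromOptions (T : Set Outcome) : Outcome :=
  if Outcome.L ∈ T ∧ T ⊆ {Outcome.L, Outcome.N} then Outcome.L
  else if Outcome.R ∈ T ∧ T ⊆ {Outcome.R, Outcome.N} then Outcome.R
  else if T = {Outcome.N} then Outcome.P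
  else Outcome.N

/-- Outcome of Ending Partizan Subtraction Nim with removable set `S ⊆ ℤ≥2` and
terminal assignment `W`. -/
noncomputable def epOutcome (S : Set ℕ) (hS : ∀ s ∈ S, 2 ≤ s) (W : ℕ → Outcome) : ℕ → Outcome :=
  fun n => Nat.strongRecOn n (fun n ih =>
    if ∃ s ∈ S, s ≤ n then
      fromOptions {o | ∃ s, ∃ hs : s ∈ S, ∃ hsn : s ≤ n,
        o = ih (n - s) (by have := hS s hs; omega)}
    else W n)

/-- Outcome of `LR`-Subtraction Nim: at a terminal position, Left wins if the number of
remaining tokens is even, Right wins if it is odd. -/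
noncomputable def lrOutcome (S : Set ℕ) (hS : ∀ s ∈ S, 2 ≤ s) : ℕ → Outcome :=
  epOutcome S hS (fun n => if Even n then Outcome.L else Outcome.R)

lemma epOutcome_eq (S : Set ℕ) (hS : ∀ s ∈ S, 2 ≤ s) (W : ℕ → Outcome) (n : ℕ) :
    epOutcome S hS W n = if ∃ s ∈ S, s ≤ n then
      fromOptions {o | ∃ s, ∃ _ : s ∈ S, ∃ _ : s ≤ n, o = epOutcome S hS W (n - s)}
    else W n := by
  conv_lhs => rw [epOutcome, Nat.strongRecOn, WellFounded.fix_eq]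
  rfl

lemma fo_L {T : Set Outcome} (h1 : Outcome.L ∈ T) (h2 : T ⊆ {Outcome.L, Outcome.N}) :
    fromOptions T = Outcome.L := by
  rw [fromOptions, if_pos ⟨h1, h2⟩]

lemma fo_N {T : Set Outcome} (h1 : Outcome.L ∈ T) (h2 : Outcome.R ∈ T) :
    fromOptions T = Outcome.N := by
  rw [fromOptions, if_neg, if_neg, if_neg]
  · intro h; rw [h] at h1; simp at h1
  · rintro ⟨-, hsub⟩; have := hsub h1; simp at this
  · rintro ⟨-, hsub⟩; have := hsub h2; simp at this

lemma lr_rec (S : Set ℕ) (hSdef : S = {2, 3, 6}) (hS : ∀ s ∈ S, 2 ≤ s) (n : ℕ) :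
    lrOutcome S hS n = if 2 ≤ n then
      fromOptions {o | (2 ≤ n ∧ o = lrOutcome S hS (n - 2)) ∨
        (3 ≤ n ∧ o = lrOutcome S hS (n - 3)) ∨ (6 ≤ n ∧ o = lrOutcome S hS (n - 6))}
    else (if Even n then Outcome.L else Outcome.R) := by
  rw [lrOutcome, epOutcome_eq S hS _ n]
  by_cases h : 2 ≤ n
  · rw [if_pos (by exact ⟨2, by rw [hSdef]; simp, h⟩), if_pos h]
    rw [← lrOutcome]
    congr 1
    ext o
    simp only [Set.mem_setOf_eq]
    constructor
    · rintro ⟨s, hs, hsn, rfl⟩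
      rw [hSdef] at hs
      simp only [Set.mem_insert_iff, Set.mem_singleton_iff] at hs
      rcases hs with rfl | rfl | rfl
      · exact Or.inl ⟨hsn, rfl⟩
      · exact Or.inr (Or.inl ⟨hsn, rfl⟩)
      · exact Or.inr (Or.inr ⟨hsn, rfl⟩)
    · rintro (⟨hn, rfl⟩ | ⟨hn, rfl⟩ | ⟨hn, rfl⟩)
      · exact ⟨2, by rw [hSdef]; simp, hn, rfl⟩
      · exact ⟨3, by rw [hSdef]; simp, hn, rfl⟩
      · exact ⟨6, by rw [hSdef]; simp, hn, rfl⟩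
  · rw [if_neg, if_neg h]
    rintro ⟨s, hs, hsn⟩
    have := hS s hs
    omega

lemma lr_main (S : Set ℕ) (hSdef : S = {2, 3, 6}) (hS : ∀ s ∈ S, 2 ≤ s) : ∀ n : ℕ,
    ((n = 0 ∨ n = 2 ∨ n = 5 ∨ n = 6 ∨ 8 ≤ n) → lrOutcome S hS n = Outcome.L) ∧
    (n = 1 → lrOutcome S hS n = Outcome.R) ∧
    ((n = 3 ∨ n = 4 ∨ n = 7) → lrOutcome S hS n = Outcome.N) := by
  intro n
  induction n using Nat.strongRecOn with
  | ind n ih =>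
    have hL : ∀ m < n, (m = 0 ∨ m = 2 ∨ m = 5 ∨ m = 6 ∨ 8 ≤ m) → lrOutcome S hS m = Outcome.L :=
      fun m hm => (ih m hm).1
    have hR : ∀ m < n, m = 1 → lrOutcome S hS m = Outcome.R := fun m hm => (ih m hm).2.1
    have hN : ∀ m < n, (m = 3 ∨ m = 4 ∨ m = 7) → lrOutcome S hS m = Outcome.N :=
      fun m hm => (ih m hm).2.2
    have hLN : ∀ m < n, 2 ≤ m → lrOutcome S hS m = Outcome.L ∨ lrOutcome S hS m = Outcome.N := by
      intro m hm h2
      rcases (show m = 2 ∨ m = 3 ∨ m = 4 ∨ m = 5 ∨ m = 6 ∨ m = 7 ∨ 8 ≤ m by omega) with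
        h | h | h | h | h | h | h
      · exact Or.inl (hL m hm (by omega))
      · exact Or.inr (hN m hm (by omega))
      · exact Or.inr (hN m hm (by omega))
      · exact Or.inl (hL m hm (by omega))
      · exact Or.inl (hL m hm (by omega))
      · exact Or.inr (hN m hm (by omega))
      · exact Or.inl (hL m hm (by omega))
    have hrec := lr_rec S hSdef hS
    rcases (show n = 0 ∨ n = 1 ∨ n = 2 ∨ n = 3 ∨ n = 4 ∨ n = 5 ∨ n = 6 ∨ n = 7 ∨ 8 ≤ n
      by omega) with h | h | h | h | h | h | h | h | h
    · subst h
      refine ⟨fun _ => ?_, by omega, by omega⟩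
      rw [hrec _]; norm_num
    · subst h
      refine ⟨by omega, fun _ => ?_, by omega⟩
      rw [hrec _]; norm_num
    · subst h
      refine ⟨fun _ => ?_, by omega, by omega⟩
      rw [hrec _, if_pos (by norm_num)]
      apply fo_L
      · exact Or.inl ⟨by norm_num, (hL 0 (by norm_num) (by omega)).symm⟩
      · rintro o (⟨-, rfl⟩ | ⟨h3, -⟩ | ⟨h6, -⟩)
        · rw [hL 0 (by norm_num) (by omega)]; simp
        · omega
        · omega
    · subst h
      refine ⟨by omega, by omega, fun _ => ?_⟩
      rw [hrec _, if_pos (by norm_num)]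
      apply fo_N
      · exact Or.inr (Or.inl ⟨by norm_num, (hL 0 (by norm_num) (by omega)).symm⟩)
      · exact Or.inl ⟨by norm_num, (hR 1 (by norm_num) rfl).symm⟩
    · subst h
      refine ⟨by omega, by omega, fun _ => ?_⟩
      rw [hrec _, if_pos (by norm_num)]
      apply fo_N
      · exact Or.inl ⟨by norm_num, (hL 2 (by norm_num) (by omega)).symm⟩
      · exact Or.inr (Or.inl ⟨by norm_num, (hR 1 (by norm_num) rfl).symm⟩)
    · subst h
      refine ⟨fun _ => ?_, by omega, by omega⟩
      rw [hrec _, if_pos (by norm_num)]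
      apply fo_L
      · exact Or.inr (Or.inl ⟨by norm_num, (hL 2 (by norm_num) (by omega)).symm⟩)
      · rintro o (⟨-, rfl⟩ | ⟨-, rfl⟩ | ⟨h6, -⟩)
        · rw [hN 3 (by norm_num) (by omega)]; simp
        · rw [hL 2 (by norm_num) (by omega)]; simp
        · omega
    · subst h
      refine ⟨fun _ => ?_, by omega, by omega⟩
      rw [hrec _, if_pos (by norm_num)]
      apply fo_L
      · exact Or.inr (Or.inr ⟨by norm_num, (hL 0 (by norm_num) (by omega)).symm⟩)
      · rintro o (⟨-, rfl⟩ | ⟨-, rfl⟩ | ⟨-, rfl⟩)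
        · rw [hN 4 (by norm_num) (by omega)]; simp
        · rw [hN 3 (by norm_num) (by omega)]; simp
        · rw [hL 0 (by norm_num) (by omega)]; simp
    · subst h
      refine ⟨by omega, by omega, fun _ => ?_⟩
      rw [hrec _, if_pos (by norm_num)]
      apply fo_N
      · exact Or.inl ⟨by norm_num, (hL 5 (by norm_num) (by omega)).symm⟩
      · exact Or.inr (Or.inr ⟨by norm_num, (hR 1 (by norm_num) rfl).symm⟩)
    · -- 8 ≤ n
      refine ⟨fun _ => ?_, by omega, by omega⟩
      rw [hrec _, if_pos (by omega)]
      apply fo_L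
      · by_cases h10 : n = 10
        · exact Or.inl ⟨by omega, (hL (n - 2) (by omega) (by omega)).symm⟩
        · exact Or.inr (Or.inl ⟨by omega, (hL (n - 3) (by omega) (by omega)).symm⟩)
      · rintro o (⟨-, rfl⟩ | ⟨-, rfl⟩ | ⟨-, rfl⟩)
        · rcases hLN (n - 2) (by omega) (by omega) with h' | h' <;> rw [h'] <;> simp
        · rcases hLN (n - 3) (by omega) (by omega) with h' | h' <;> rw [h'] <;> simp
        · rcases hLN (n - 6) (by omega) (by omega) with h' | h' <;> rw [h'] <;> simp

theorem stmt1 (S : Set ℕ) (hSdef : S = {2, 3, 6}) (hS : ∀ s ∈ S, 2 ≤ s) (n : ℕ) :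
    ((n = 0 ∨ n = 2 ∨ n = 5 ∨ n = 6 ∨ 8 ≤ n) → lrOutcome S hS n = Outcome.L) ∧
    (n = 1 → lrOutcome S hS n = Outcome.R) ∧
    ((n = 3 ∨ n = 4 ∨ n = 7) → lrOutcome S hS n = Outcome.N) := by
  exact lr_main S hSdef hS n
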